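/- Let h̄ ∈ Λ̂₀ be a local functional whose variational derivative satisfies δh̄/δu ∈ Im ∂ₓ. Then h̄ = ∫h dx for some differential polynomial h ∈ 𝒜̂₀ with ∂h/∂u₀ = 0. -/

import Mathlib

/-!
Fix an ε-coefficient `f` of `h₀`, a differential polynomial of degree `d`. In
`δf/δu = ∑ₙ (−∂ₓ)ⁿ ∂f/∂uₙ` every term with `n ≥ 1` is a total derivative, so the
hypothesis gives `∂f/∂u₀ = ∂ₓG`. Integrating `G` in `u₀` yields `F` with `∂F/∂u₀ = G`, and
since `∂/∂u₀` commutes with `∂ₓ`, `f − ∂ₓF` does not depend on `u₀`. Replacing `∂ₓF` by its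
degree-`d` component keeps this property, because `∂/∂u₀` preserves degrees, and the component
is still a total derivative, because `∂ₓ` raises degrees by exactly one.
-/

open scoped Classical
open PowerSeries

noncomputable section

namespace RiemannPaper

/-- ℂ[[u₀]] -/
abbrev RR : Type := PowerSeries ℂ
/-- 𝒜 = ℂ[[u₀]][u₁,u₂,…] -/
abbrev AA : Type := MvPolynomial ℕ+ RR
/-- 𝒜̂ = 𝒜[[ε]] -/
abbrev AH : Type := PowerSeries AA

/-- the variable uₙ as an element of 𝒜 (u₀ is the power-series variable of the coefficients) -/
def uv (n : ℕ) : AA :=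
  if h : 0 < n then MvPolynomial.X (⟨n, h⟩ : ℕ+) else MvPolynomial.C PowerSeries.X

/-- ∂/∂u₀ on 𝒜 -/
def pd0 (f : AA) : AA :=
  ∑ m ∈ f.support, MvPolynomial.monomial m (PowerSeries.derivativeFun (MvPolynomial.coeff m f))

/-- ∂/∂uₙ on 𝒜 -/
def pdA : ℕ → AA → AA
  | 0 => pd0
  | (n+1) => fun f => MvPolynomial.pderiv (⟨n+1, n.succ_pos⟩ : ℕ+) f

/-- ∂ₓ on 𝒜 -/
def dxA (f : AA) : AA := ∑ᶠ n : ℕ, uv (n+1) * pdA n f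

/-- coefficientwise (ℂ[[ε]]-linear) extension of an operator on 𝒜 to 𝒜̂ -/
def lift1 (F : AA → AA) (h : AH) : AH := PowerSeries.mk fun k => F (PowerSeries.coeff (R := AA) k h)

/-- ∂ₓ on 𝒜̂ -/
def dxH : AH → AH := lift1 dxA
/-- ∂/∂uₙ on 𝒜̂ -/
def pdH (n : ℕ) : AH → AH := lift1 (pdA n)
def negDxA (f : AA) : AA := -dxA f
def negDxH (h : AH) : AH := -dxH h

/-- evolutionary operator D_P = ∑ₙ (∂ₓⁿP)·∂/∂uₙ on 𝒜 -/
def DopA (P f : AA) : AA := ∑ᶠ n : ℕ, (dxA^[n] P) * pdA n f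
/-- evolutionary operator D_P on 𝒜̂ -/
def DopH (P f : AH) : AH :=
  PowerSeries.mk fun k => ∑ᶠ n : ℕ, PowerSeries.coeff (R := AA) k ((dxH^[n] P) * pdH n f)

/-- variational derivative δ/δu = ∑ₙ(−∂ₓ)ⁿ∘∂/∂uₙ on 𝒜 -/
def varDA (f : AA) : AA := ∑ᶠ n : ℕ, negDxA^[n] (pdA n f)
/-- variational derivative on 𝒜̂ -/
def varD (f : AH) : AH :=
  PowerSeries.mk fun k => ∑ᶠ n : ℕ, PowerSeries.coeff (R := AA) k (negDxH^[n] (pdH n f))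

/-- weighted degree of a monomial, deg uₙ = n -/
def wdeg (m : ℕ+ →₀ ℕ) : ℕ := m.sum fun i e => (i : ℕ) * e
/-- f is homogeneous of differential degree d -/
def homogA (f : AA) (d : ℤ) : Prop := ∀ m ∈ f.support, (wdeg m : ℤ) = d
/-- f ∈ 𝒜̂_d (deg ε = −1) -/
def memAH (d : ℤ) (f : AH) : Prop := ∀ k : ℕ, homogA (PowerSeries.coeff (R := AA) k f) (d + k)

/-- Im ∂ₓ ⊕ ℂ ⊂ 𝒜, so that Λ = 𝒜/NA -/
def NA : Submodule ℂ AA := Submodule.span ℂ (Set.range dxA ∪ Set.range (algebraMap ℂ AA))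
/-- Im ∂ₓ ⊕ ℂ[[ε]] ⊂ 𝒜̂, so that Λ̂ = 𝒜̂/NH -/
def NH : Submodule ℂ AH :=
  Submodule.span ℂ (Set.range dxH ∪ Set.range (⇑(PowerSeries.map (algebraMap ℂ AA))))

/-- ε ∈ 𝒜̂ -/
def epsH : AH := PowerSeries.X
/-- uₙ as an element of 𝒜̂ -/
def uH (n : ℕ) : AH := PowerSeries.C (R := AA) (uv n)

/-- a differential operator K = ∑ᵢ Kᵢ∂ₓ^i (finite sum) applied to f -/
def opApply (K : ℕ →₀ AH) (f : AH) : AH := K.sum fun i c => c * dxH^[i] f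
/-- L(Q) = ∑ₙ(∂Q/∂uₙ)∂ₓⁿ applied to f -/
def Lapp (Q f : AH) : AH :=
  PowerSeries.mk fun k => ∑ᶠ n : ℕ, PowerSeries.coeff (R := AA) k (pdH n Q * dxH^[n] f)
/-- L(Q)† = ∑ₙ(−∂ₓ)ⁿ∘(∂Q/∂uₙ) applied to f -/
def LadjApp (Q f : AH) : AH :=
  PowerSeries.mk fun k => ∑ᶠ n : ℕ, PowerSeries.coeff (R := AA) k (negDxH^[n] (pdH n Q * f))

/-- canonical representative of the bracket {f̄,h̄}_K = ∫ δf̄/δu · K(δh̄/δu) dx -/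
def brRep (K : ℕ →₀ AH) (f h : AH) : AH := varD f * opApply K (varD h)
/-- K is a Poisson operator: the bracket is skew-symmetric and satisfies Jacobi (in Λ̂) -/
def IsPoisson (K : ℕ →₀ AH) : Prop :=
  (∀ f h : AH, brRep K f h + brRep K h f ∈ NH) ∧
  (∀ f g h : AH,
    brRep K (brRep K f g) h + brRep K (brRep K g h) f + brRep K (brRep K h f) g ∈ NH)

/-- K has degree 1 -/
def opDeg1 (K : ℕ →₀ AH) : Prop := ∀ i : ℕ, memAH (1 - (i : ℤ)) (K i)
/-- K|_{ε=0} = ∂ₓ -/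
def opEps0Dx (K : ℕ →₀ AH) : Prop :=
  ∀ i : ℕ, PowerSeries.coeff (R := AA) 0 (K i) = if i = 1 then 1 else 0

/-- g ∈ ℂ[[u₀]] as an element of 𝒜̂ -/
def cH (g : RR) : AH := PowerSeries.C (R := AA) (MvPolynomial.C g)
/-- truncation of an element of 𝒜̂ keeping the ε-coefficients up to εᵏ -/
def truncAH (k : ℕ) (h : AH) : AH :=
  ∑ i ∈ Finset.range (k+1), (PowerSeries.monomial (R := AA) i) (PowerSeries.coeff (R := AA) i h)
/-- the Taylor evaluation g(w) for g ∈ ℂ[[u₀]] and w ≡ u₀ mod ε -/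
def tayl (g : RR) (w : AH) : AH := PowerSeries.mk fun k =>
  PowerSeries.coeff (R := AA) k (∑ j ∈ Finset.range (k+1),
    ((j.factorial : ℂ))⁻¹ • (cH (PowerSeries.derivativeFun^[j] g) * (w - uH 0) ^ j))

/-- S is the substitution map S_w, the unique continuous ℂ[[ε]]-algebra endomorphism of 𝒜̂
with S(uₙ) = ∂ₓⁿ(w) -/
structure IsSubst (w : AH) (S : AH → AH) : Prop where
  map_add : ∀ a b, S (a + b) = S a + S b
  map_mul : ∀ a b, S (a * b) = S a * S b
  map_one : S 1 = 1
  map_smul : ∀ (c : ℂ) (a), S (c • a) = c • S a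
  map_eps : ∀ a, S (epsH * a) = epsH * S a
  map_u : ∀ n : ℕ, S (uH n) = dxH^[n] w
  map_ps : ∀ g : RR, S (cH g) = tayl g w
  cont : ∀ a (k : ℕ),
    PowerSeries.coeff (R := AA) k (S a) = PowerSeries.coeff (R := AA) k (S (truncAH k a))

/-- w is a Miura transformation: w = u₀ + εf, f ∈ 𝒜̂₁ -/
def isMiura (w : AH) : Prop := ∃ f : AH, memAH 1 f ∧ w = uH 0 + epsH * f
/-- w belongs to Mi_{∂ₓ}: L(w)∘∂ₓ∘L(w)† = ∂ₓ -/
def inMiDx (w : AH) : Prop := ∀ f : AH, Lapp w (dxH (LadjApp w f)) = dxH f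
/-- w is a normal Miura transformation: w = u₀ + ∂ₓ²P, P ∈ 𝒜̂₋₂ -/
def isNormalMiura (w : AH) : Prop := ∃ P : AH, memAH (-2) P ∧ w = uH 0 + dxH (dxH P)

/-- u_λ = ∏ᵢ u_{λᵢ} -/
def uP {n : ℕ} (l : n.Partition) : AA := (l.parts.map uv).prod
/-- the parts of λ sorted in decreasing order -/
def sortedParts {n : ℕ} (l : n.Partition) : List ℕ := (l.parts.sort (· ≤ ·)).reverse
/-- lexicographic order on partitions -/
def lexLt {n : ℕ} (l m : n.Partition) : Prop :=
  List.Lex (· < ·) (sortedParts l) (sortedParts m)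
def lexLe {n : ℕ} (l m : n.Partition) : Prop := lexLt l m ∨ l = m
/-- λ ∈ 𝒫ₙ°: at least two parts and λ₁ = λ₂ -/
def Pcirc {n : ℕ} (l : n.Partition) : Prop :=
  2 ≤ Multiset.card l.parts ∧ (sortedParts l).getD 0 0 = (sortedParts l).getD 1 0
/-- λ ∈ 𝒫ₙ′: λ ∈ 𝒫ₙ° and all parts ≥ 2 -/
def Pprime {n : ℕ} (l : n.Partition) : Prop := Pcirc l ∧ ∀ i ∈ l.parts, 2 ≤ i
/-- (λ,1): adjoin a part equal to 1 -/
def addOne {n : ℕ} (l : n.Partition) : (n+1).Partition where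
  parts := 1 ::ₘ l.parts
  parts_pos := by
    intro i hi
    rcases Multiset.mem_cons.mp hi with h | h
    · simp [h]
    · exact l.parts_pos h
  parts_sum := by simp [l.parts_sum, add_comm]

end RiemannPaper

namespace MvPolynomial

variable {σ R : Type*} [CommSemiring R]

theorem addMonoidAlgebraMap_X_mul (φ : R →+ R) (i : σ) (p : MvPolynomial σ R) :
    AddMonoidAlgebra.map φ (X i * p) = X i * AddMonoidAlgebra.map φ p := by
  ext m
  simp only [coeff_addMonoidAlgebraMap, coeff_X_mul']
  split_ifs <;> simp

theorem addMonoidAlgebraMap_pderiv (φ : R →+ R) (i : σ) (p : MvPolynomial σ R) :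
    AddMonoidAlgebra.map φ (pderiv i p) = pderiv i (AddMonoidAlgebra.map φ p) := by
  ext m
  rw [coeff_addMonoidAlgebraMap, coeff_pderiv, coeff_pderiv, coeff_addMonoidAlgebraMap]
  have h := map_nsmul φ (m i + 1) (coeff (m + Finsupp.single i 1) p)
  simp only [nsmul_eq_mul', Nat.cast_add_one] at h
  exact h

theorem addMonoidAlgebraMap_weightedHomogeneousComponent {M : Type*} [AddCommMonoid M]
    (w : σ → M) (n : M) (φ : R →+ R) (p : MvPolynomial σ R) :
    AddMonoidAlgebra.map φ (weightedHomogeneousComponent w n p) =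
      weightedHomogeneousComponent w n (AddMonoidAlgebra.map φ p) := by
  ext m
  simp only [coeff_addMonoidAlgebraMap, coeff_weightedHomogeneousComponent]
  split_ifs <;> simp

theorem weightedHomogeneousComponent_succ_map {w : σ → ℕ}
    {T : MvPolynomial σ R →+ MvPolynomial σ R}
    (hT : ∀ p n, IsWeightedHomogeneous w p n → IsWeightedHomogeneous w (T p) (n + 1))
    (n : ℕ) (p : MvPolynomial σ R) :
    weightedHomogeneousComponent w (n + 1) (T p) = T (weightedHomogeneousComponent w n p) := by
  induction p using MvPolynomial.induction_on' with
  | monomial m c =>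
    have hm := isWeightedHomogeneous_monomial w m c rfl
    by_cases hmn : Finsupp.weight w m = n
    · rw [← hmn, (hT _ _ hm).weightedHomogeneousComponent_same,
        hm.weightedHomogeneousComponent_same]
    · rw [(hT _ _ hm).weightedHomogeneousComponent_ne _ (by omega),
        hm.weightedHomogeneousComponent_ne _ (Ne.symm hmn), map_zero]
  | add p q hp hq => simp only [map_add, hp, hq]

theorem weightedHomogeneousComponent_zero_map {w : σ → ℕ}
    {T : MvPolynomial σ R →+ MvPolynomial σ R}
    (hT : ∀ p n, IsWeightedHomogeneous w p n → IsWeightedHomogeneous w (T p) (n + 1))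
    (p : MvPolynomial σ R) : weightedHomogeneousComponent w 0 (T p) = 0 := by
  induction p using MvPolynomial.induction_on' with
  | monomial m c =>
    exact (hT _ _ (isWeightedHomogeneous_monomial w m c rfl)).weightedHomogeneousComponent_ne _
      (by omega)
  | add p q hp hq => simp only [map_add, hp, hq, add_zero]

theorem IsWeightedHomogeneous.addMonoidAlgebraMap {M : Type*} [AddCommMonoid M] {w : σ → M}
    {p : MvPolynomial σ R} {n : M} (hp : IsWeightedHomogeneous w p n) (φ : R →+ R) :
    IsWeightedHomogeneous w (AddMonoidAlgebra.map φ p) n := fun m hm =>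
  hp fun h => hm (by rw [coeff_addMonoidAlgebraMap, h, map_zero])

theorem IsWeightedHomogeneous.X_mul_pderiv {w : σ → ℕ} {p : MvPolynomial σ R} {n : ℕ}
    (hp : IsWeightedHomogeneous w p n) {i j : σ} (hij : w j = w i + 1) :
    IsWeightedHomogeneous w (X j * pderiv i p) (n + 1) := by
  induction hp using IsWeightedHomogeneous.induction_on with
  | zero => simpa using isWeightedHomogeneous_zero R w (n + 1)
  | add p q _ _ hp hq => simpa only [map_add, mul_add] using hp.add hq
  | monomial m c hm =>
    rw [pderiv_monomial]
    by_cases hmi : m i = 0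
    · simpa [hmi] using isWeightedHomogeneous_zero R w (n + 1)
    have hsub : Finsupp.weight w (m - Finsupp.single i 1) + w i = n := by
      have hle : Finsupp.single i 1 ≤ m :=
        Finsupp.single_le_iff.mpr (Nat.one_le_iff_ne_zero.mpr hmi)
      rw [← hm, ← tsub_add_cancel_of_le hle, map_add, Finsupp.weight_single, one_smul,
        add_tsub_cancel_right]
    have := (isWeightedHomogeneous_X R w j).mul
      (isWeightedHomogeneous_monomial w (m - Finsupp.single i 1) (c * (m i : R)) rfl)
    rwa [hij, add_comm, ← add_assoc, hsub] at this

end MvPolynomial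

namespace PowerSeries

theorem derivative_surjective {K : Type*} [Field K] [CharZero K] :
    Function.Surjective (derivative K) := by
  intro g
  refine ⟨mk fun n => (n : K)⁻¹ * coeff (n - 1) g, ?_⟩
  ext n
  rw [coeff_derivative, coeff_mk, Nat.add_sub_cancel, Nat.cast_add_one]
  field_simp

end PowerSeries

namespace RiemannPaper

theorem pd0_eq_addMonoidAlgebraMap (f : AA) :
    pd0 f = AddMonoidAlgebra.map (derivative ℂ).toAddMonoidHom f := by
  ext m
  rw [pd0, MvPolynomial.coeff_sum, MvPolynomial.coeff_addMonoidAlgebraMap]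
  simp only [MvPolynomial.coeff_monomial, Finset.sum_ite_eq']
  split_ifs with h
  · rfl
  · simp [MvPolynomial.notMem_support_iff.mp h]

theorem pd0_surjective : Function.Surjective pd0 := by
  rw [funext pd0_eq_addMonoidAlgebraMap]
  exact AddMonoidAlgebra.map_surjective _ PowerSeries.derivative_surjective

theorem wdeg_eq_weight (m : ℕ+ →₀ ℕ) : wdeg m = Finsupp.weight PNat.val m := by
  simp only [wdeg, Finsupp.weight_apply, smul_eq_mul, mul_comm]

theorem memAH_zero_iff (h : AH) :
    memAH 0 h ↔ ∀ k, (coeff k h).IsWeightedHomogeneous PNat.val k := by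
  simp only [memAH, homogA, zero_add, MvPolynomial.IsWeightedHomogeneous,
    MvPolynomial.mem_support_iff, wdeg_eq_weight, Nat.cast_inj]

theorem pdA_succ (n : ℕ) (f : AA) : pdA (n + 1) f = MvPolynomial.pderiv n.succPNat f :=
  rfl

theorem uv_succ (n : ℕ) : uv (n + 1) = MvPolynomial.X n.succPNat :=
  dif_pos n.succ_pos

theorem pd0_sub (a b : AA) : pd0 (a - b) = pd0 a - pd0 b := by
  simp only [pd0_eq_addMonoidAlgebraMap, AddMonoidAlgebra.map_sub]

theorem pdA_add (n : ℕ) (a b : AA) : pdA n (a + b) = pdA n a + pdA n b := by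
  cases n with
  | zero => simp only [pdA, pd0_eq_addMonoidAlgebraMap, AddMonoidAlgebra.map_add]
  | succ n => exact map_add _ a b

theorem pd0_pdA (n : ℕ) (f : AA) : pd0 (pdA n f) = pdA n (pd0 f) := by
  cases n with
  | zero => rfl
  | succ n =>
    rw [pdA_succ, pdA_succ, pd0_eq_addMonoidAlgebraMap, pd0_eq_addMonoidAlgebraMap]
    exact MvPolynomial.addMonoidAlgebraMap_pderiv _ _ f

theorem exists_pdA_eq_zero (f : AA) : ∃ N, ∀ n, N ≤ n → pdA n f = 0 := by
  refine ⟨f.vars.sup PNat.val + 1, fun n hn => ?_⟩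
  obtain ⟨k, rfl⟩ : ∃ k, n = k + 1 := ⟨n - 1, by omega⟩
  refine (pdA_succ k f).trans (MvPolynomial.pderiv_eq_zero_of_notMem_vars fun hk => ?_)
  have := Finset.le_sup (f := PNat.val) hk
  rw [Nat.succPNat_coe] at this
  omega

theorem dxA_eq_sum {f : AA} {N : ℕ} (hN : ∀ n, N ≤ n → pdA n f = 0) :
    dxA f = ∑ n ∈ Finset.range N, uv (n + 1) * pdA n f := by
  refine finsum_eq_finsetSum_of_support_subset _ fun n hn => ?_
  rw [Finset.coe_range, Set.mem_Iio]
  by_contra h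
  exact hn (by simp only [hN n (not_lt.mp h), mul_zero])

theorem dxA_add (a b : AA) : dxA (a + b) = dxA a + dxA b := by
  obtain ⟨N, hN⟩ := exists_pdA_eq_zero a
  obtain ⟨M, hM⟩ := exists_pdA_eq_zero b
  have ha : ∀ n, max N M ≤ n → pdA n a = 0 := fun n hn => hN n (le_of_max_le_left hn)
  have hb : ∀ n, max N M ≤ n → pdA n b = 0 := fun n hn => hM n (le_of_max_le_right hn)
  have hab : ∀ n, max N M ≤ n → pdA n (a + b) = 0 := fun n hn => by
    rw [pdA_add, ha n hn, hb n hn, add_zero]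
  rw [dxA_eq_sum ha, dxA_eq_sum hb, dxA_eq_sum hab, ← Finset.sum_add_distrib]
  simp only [pdA_add, mul_add]

def dxAHom : AA →+ AA := AddMonoidHom.mk' dxA dxA_add

theorem dxA_zero : dxA 0 = 0 := map_zero dxAHom

theorem dxA_sum {ι : Type*} (s : Finset ι) (F : ι → AA) :
    dxA (∑ i ∈ s, F i) = ∑ i ∈ s, dxA (F i) :=
  map_sum dxAHom F s

theorem pd0_dxA (f : AA) : pd0 (dxA f) = dxA (pd0 f) := by
  obtain ⟨N, hN⟩ := exists_pdA_eq_zero f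
  have hN' : ∀ n, N ≤ n → pdA n (pd0 f) = 0 := fun n hn => by
    rw [← pd0_pdA, hN n hn, pd0_eq_addMonoidAlgebraMap, AddMonoidAlgebra.map_zero]
  rw [dxA_eq_sum hN, dxA_eq_sum hN', pd0_eq_addMonoidAlgebraMap, AddMonoidAlgebra.map_sum]
  refine Finset.sum_congr rfl fun n _ => ?_
  rw [uv_succ, MvPolynomial.addMonoidAlgebraMap_X_mul, ← pd0_eq_addMonoidAlgebraMap, pd0_pdA]

theorem isWeightedHomogeneous_dxA {f : AA} {d : ℕ}
    (hf : f.IsWeightedHomogeneous PNat.val d) :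
    (dxA f).IsWeightedHomogeneous PNat.val (d + 1) := by
  obtain ⟨N, hN⟩ := exists_pdA_eq_zero f
  rw [dxA_eq_sum hN]
  refine MvPolynomial.IsWeightedHomogeneous.sum _ _ _ fun n _ => ?_
  cases n with
  | zero =>
    have := (MvPolynomial.isWeightedHomogeneous_X RR PNat.val (1 : ℕ+)).mul
      (hf.addMonoidAlgebraMap (derivative ℂ).toAddMonoidHom)
    rwa [PNat.val_ofNat, add_comm, ← pd0_eq_addMonoidAlgebraMap] at this
  | succ n =>
    rw [uv_succ, pdA_succ]
    exact hf.X_mul_pderiv (by simp only [Nat.succPNat_coe])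

theorem exists_pd0_eq_dxA_of_varDA_eq_dxA {f g : AA} (h : varDA f = dxA g) :
    ∃ G, pd0 f = dxA G := by
  obtain ⟨N, hN⟩ := exists_pdA_eq_zero f
  have hzero : ∀ n, negDxA^[n] 0 = 0 :=
    Function.iterate_fixed (by rw [negDxA, dxA_zero, neg_zero])
  set S := ∑ n ∈ Finset.range N, negDxA^[n] (pdA (n + 1) f)
  have hvar : varDA f = pd0 f - dxA S := by
    rw [varDA, finsum_eq_finsetSum_of_support_subset (s := Finset.range (N + 1)) _ fun n hn => ?_,
      Finset.sum_range_succ', dxA_sum, sub_eq_neg_add, ← Finset.sum_neg_distrib]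
    · simp only [Function.iterate_succ_apply', negDxA, Function.iterate_zero_apply]
      rfl
    · rw [Finset.coe_range, Set.mem_Iio]
      by_contra hn'
      exact hn (by simp only [hN n (by omega), hzero])
  exact ⟨g + S, by rw [dxA_add, ← h, hvar, sub_add_cancel]⟩

theorem exists_isWeightedHomogeneous_sub_dxA_pd0_eq_zero {f : AA} {d : ℕ}
    (hf : f.IsWeightedHomogeneous PNat.val d) (hvar : ∃ g, varDA f = dxA g) :
    ∃ v, (f - dxA v).IsWeightedHomogeneous PNat.val d ∧ pd0 (f - dxA v) = 0 := by
  obtain ⟨g, hg⟩ := hvar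
  obtain ⟨G, hG⟩ := exists_pd0_eq_dxA_of_varDA_eq_dxA hg
  obtain ⟨F, rfl⟩ := pd0_surjective G
  let π := MvPolynomial.weightedHomogeneousComponent (R := RR) PNat.val d
  have hshift : ∀ p n, p.IsWeightedHomogeneous PNat.val n →
      (dxAHom p).IsWeightedHomogeneous PNat.val (n + 1) := fun _ _ => isWeightedHomogeneous_dxA
  obtain ⟨v, hv⟩ : ∃ v, π (dxA F) = dxA v := by
    cases d with
    | zero =>
      exact ⟨0, (MvPolynomial.weightedHomogeneousComponent_zero_map hshift F).trans dxA_zero.symm⟩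
    | succ d => exact ⟨_, MvPolynomial.weightedHomogeneousComponent_succ_map hshift d F⟩
  have hπ : ∀ p, pd0 (π p) = π (pd0 p) := fun p => by
    simp only [pd0_eq_addMonoidAlgebraMap, π,
      MvPolynomial.addMonoidAlgebraMap_weightedHomogeneousComponent]
  have hv_hom : (dxA v).IsWeightedHomogeneous PNat.val d :=
    hv ▸ MvPolynomial.weightedHomogeneousComponent_isWeightedHomogeneous _ _
  refine ⟨v, hf.sub hv_hom, ?_⟩
  rw [← hv, pd0_sub, hπ, pd0_dxA, ← hG, ← hπ, hf.weightedHomogeneousComponent_same, sub_self]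

theorem coeff_dxH (k : ℕ) (x : AH) : coeff k (dxH x) = dxA (coeff k x) :=
  coeff_mk k fun k => dxA (coeff k x)

theorem coeff_pdH (n k : ℕ) (x : AH) : coeff k (pdH n x) = pdA n (coeff k x) :=
  coeff_mk k fun k => pdA n (coeff k x)

theorem coeff_negDxH_iterate (n k : ℕ) (x : AH) :
    coeff k (negDxH^[n] x) = negDxA^[n] (coeff k x) := by
  induction n generalizing x with
  | zero => rfl
  | succ n ih => rw [Function.iterate_succ_apply, ih, Function.iterate_succ_apply, negDxH,
      map_neg, coeff_dxH, negDxA]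

theorem coeff_varD (k : ℕ) (f : AH) : coeff k (varD f) = varDA (coeff k f) := by
  rw [varD, coeff_mk, varDA]
  exact finsum_congr fun n => by rw [coeff_negDxH_iterate, coeff_pdH]

/-- Corollary 2.4(2): if h̄ ∈ Λ̂₀ satisfies δh̄/δu ∈ Im ∂ₓ, then h̄ = ∫h dx for some h with
∂h/∂u₀ = 0. (Stated on representatives: h₀ represents h̄.) -/
theorem stmt6 (h₀ : AH) (hmem : memAH 0 h₀) (hvar : ∃ g : AH, varD h₀ = dxH g) :
    ∃ h : AH, memAH 0 h ∧ pdH 0 h = 0 ∧ h₀ - h ∈ NH := by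
  obtain ⟨g, hg⟩ := hvar
  have hcoeff : ∀ k, ∃ v, (coeff k h₀ - dxA v).IsWeightedHomogeneous PNat.val k ∧
      pd0 (coeff k h₀ - dxA v) = 0 := fun k =>
    exists_isWeightedHomogeneous_sub_dxA_pd0_eq_zero ((memAH_zero_iff h₀).mp hmem k)
      ⟨coeff k g, by rw [← coeff_varD, hg, coeff_dxH]⟩
  choose v hv_hom hv_pd0 using hcoeff
  refine ⟨h₀ - dxH (PowerSeries.mk v), (memAH_zero_iff _).mpr fun k => ?_, ?_, ?_⟩
  · rw [map_sub, coeff_dxH, coeff_mk]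
    exact hv_hom k
  · refine PowerSeries.ext fun k => ?_
    rw [coeff_pdH, map_sub, coeff_dxH, coeff_mk, map_zero]
    exact hv_pd0 k
  · rw [sub_sub_cancel]
    exact Submodule.subset_span (Or.inl ⟨_, rfl⟩)

end RiemannPaper
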